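/- For every probability measure μ on ℝ with compact support and every x ∈ ℝ: D(N(x,σ1²) ‖ μ∗N(0,σ1²)) − D(N(x,σ2²) ‖ μ∗N(0,σ2²)) = ∫_ℝ g(y) φ_{σ1}(y−x) dy + log(σ2/σ1), where D is the Kullback–Leibler divergence. -/

import Mathlib

/-!
When `μ` is supported in `[-R, R]`, the density `f_σ` of `μ ∗ N(0,σ²)` lies between
`φ_σ(|y| + R)` and `φ_σ(0)`, so `log f_σ` grows at most quadratically and is integrable against
every Gaussian. Hence `D(N(x,σ²) ‖ μ ∗ N(0,σ²)) = -log √(2πσ²) - 1/2 - E[log f_σ(Y)]` with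
`Y ∼ N(x,σ²)`, and the two entropy terms differ by `log(σ2/σ1)`. Since
`N(x,σ1²) ∗ N(0,σ2²-σ1²) = N(x,σ2²)`, integrating the first term of `g` against `φ_{σ1}(· - x)`
gives `E[log f₂(Y)]` with `Y ∼ N(x,σ2²)`, and the identity follows.
-/

open MeasureTheory Real Filter

noncomputable section

/-- The `N(0,σ²)` density `φ_σ`. -/
def phiR (σ u : ℝ) : ℝ := (Real.sqrt (2 * π * σ ^ 2))⁻¹ * Real.exp (-u ^ 2 / (2 * σ ^ 2))

/-- The Gaussian measure `N(x,σ²)` on `ℝ`. -/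
def gauss1 (σ x : ℝ) : Measure ℝ :=
  volume.withDensity fun y => ENNReal.ofReal (phiR σ (y - x))

/-- Convolution `μ ∗ N(0,σ²)`. -/
def convGauss1 (μ : Measure ℝ) (σ : ℝ) : Measure ℝ :=
  Measure.map (fun p : ℝ × ℝ => p.1 + p.2) (μ.prod (gauss1 σ 0))

/-- Kullback–Leibler divergence (real-valued). -/
def KL {α : Type*} [MeasurableSpace α] (μ ν : Measure α) : ℝ :=
  ∫ y, Real.log (μ.rnDeriv ν y).toReal ∂μ

/-- Density `f_i` of `μ ∗ N(0,σ²)`. -/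
def outDens (σ : ℝ) (μ : Measure ℝ) (y : ℝ) : ℝ := ∫ x, phiR σ (y - x) ∂μ

/-- The function `g(y) = E[log f₂(y+N)] − log f₁(y)` with `N ∼ N(0, σ2²−σ1²)`. -/
def gFun (σ1 σ2 : ℝ) (μ : Measure ℝ) (y : ℝ) : ℝ :=
  (∫ t : ℝ, Real.log (outDens σ2 μ (y + t)) * phiR (Real.sqrt (σ2 ^ 2 - σ1 ^ 2)) t)
    - Real.log (outDens σ1 μ y)

/-- Secrecy-information of the input distribution `μ`. -/
def secInfo1 (σ1 σ2 : ℝ) (μ : Measure ℝ) : ℝ :=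
  ∫ x, (KL (gauss1 σ1 x) (convGauss1 μ σ1) - KL (gauss1 σ2 x) (convGauss1 μ σ2)) ∂μ

/-- Scalar secrecy-capacity under the amplitude constraint `|X| ≤ R`. -/
def Cs1 (σ1 σ2 R : ℝ) : ℝ :=
  sSup {r : ℝ | ∃ μ : Measure ℝ, IsProbabilityMeasure μ ∧
    (∀ᵐ x ∂μ, |x| ≤ R) ∧ secInfo1 σ1 σ2 μ = r}

/-- Topological support of a measure: points all of whose open neighbourhoods
have positive measure. -/
def msupport {α : Type*} [TopologicalSpace α] [MeasurableSpace α] (μ : Measure α) : Set α :=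
  {x | ∀ U : Set α, IsOpen U → x ∈ U → 0 < μ U}

end

open scoped ENNReal
open ProbabilityTheory

lemma MeasureTheory.Integrable.integral_add_right {M F : Type*} [AddMonoid M]
    {mM : MeasurableSpace M} [MeasurableAdd₂ M] [NormedAddCommGroup F] [NormedSpace ℝ F]
    {μ ν : Measure M} [SFinite μ] [SFinite ν] {f : M → F} (hf : Integrable f (μ ∗ ν)) :
    Integrable (fun x => ∫ y, f (x + y) ∂ν) μ :=
  ((integrable_map_measure hf.1 (by fun_prop)).mp hf).integral_prod_left

lemma exists_ae_abs_le_of_isCompact {μ : Measure ℝ} {K : Set ℝ} (hK : IsCompact K)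
    (hKc : μ Kᶜ = 0) : ∃ R, ∀ᵐ x ∂μ, |x| ≤ R := by
  obtain ⟨R, hR⟩ := hK.isBounded.exists_norm_le
  exact ⟨R, measure_eq_zero_iff_ae_notMem.1 hKc |>.mono fun x hx => hR x (not_not.1 hx)⟩

section PhiR

variable {σ : ℝ}

@[fun_prop]
lemma continuous_phiR (σ : ℝ) : Continuous (phiR σ) := by
  unfold phiR; fun_prop

@[fun_prop]
lemma measurable_phiR (σ : ℝ) : Measurable (phiR σ) :=
  (continuous_phiR σ).measurable

lemma phiR_nonneg (σ u : ℝ) : 0 ≤ phiR σ u := by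
  unfold phiR; positivity

lemma phiR_pos (hσ : σ ≠ 0) (u : ℝ) : 0 < phiR σ u := by
  unfold phiR; positivity

lemma phiR_le_phiR (σ : ℝ) {u v : ℝ} (h : |u| ≤ |v|) : phiR σ v ≤ phiR σ u := by
  have huv : u ^ 2 ≤ v ^ 2 := sq_le_sq.2 h
  unfold phiR
  gcongr

lemma phiR_le (σ u : ℝ) : phiR σ u ≤ phiR σ 0 :=
  phiR_le_phiR σ (by simp)

lemma log_phiR (hσ : σ ≠ 0) (u : ℝ) :
    Real.log (phiR σ u) = -Real.log √(2 * π * σ ^ 2) - u ^ 2 / (2 * σ ^ 2) := by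
  rw [phiR, Real.log_mul (by positivity) (Real.exp_ne_zero _), Real.log_inv, Real.log_exp]
  ring

lemma log_sqrt_two_pi_mul_sq (hσ : 0 < σ) :
    Real.log √(2 * π * σ ^ 2) = Real.log √(2 * π) + Real.log σ := by
  rw [Real.sqrt_mul (by positivity), Real.sqrt_sq hσ.le, Real.log_mul (by positivity) hσ.ne']

lemma phiR_sub_eq_gaussianPDFReal (σ x y : ℝ) :
    phiR σ (y - x) = gaussianPDFReal x (σ ^ 2).toNNReal y := by
  simp [phiR, gaussianPDFReal, Real.coe_toNNReal _ (sq_nonneg σ)]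

end PhiR

section Gauss1

variable {σ : ℝ}

lemma toNNReal_sq_ne_zero (hσ : σ ≠ 0) : (σ ^ 2).toNNReal ≠ 0 :=
  (Real.toNNReal_pos.2 (by positivity)).ne'

lemma gauss1_eq_gaussianReal (hσ : σ ≠ 0) (x : ℝ) :
    gauss1 σ x = gaussianReal x (σ ^ 2).toNNReal := by
  simp only [gaussianReal_of_var_ne_zero _ (toNNReal_sq_ne_zero hσ), gauss1, gaussianPDF_def,
    phiR_sub_eq_gaussianPDFReal]

lemma isProbabilityMeasure_gauss1 (hσ : σ ≠ 0) (x : ℝ) : IsProbabilityMeasure (gauss1 σ x) := by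
  rw [gauss1_eq_gaussianReal hσ]; infer_instance

lemma integral_gauss1 (hσ : σ ≠ 0) (x : ℝ) (f : ℝ → ℝ) :
    ∫ y, f y ∂gauss1 σ x = ∫ y, f y * phiR σ (y - x) := by
  simp_rw [gauss1_eq_gaussianReal hσ, integral_gaussianReal_eq_integral_smul
    (toNNReal_sq_ne_zero hσ), phiR_sub_eq_gaussianPDFReal, smul_eq_mul, mul_comm]

lemma gauss1_conv_gauss1 {τ : ℝ} (hσ : σ ≠ 0) (hτ : τ ≠ 0) (x y : ℝ) :
    gauss1 σ x ∗ gauss1 τ y = gauss1 (√(σ ^ 2 + τ ^ 2)) (x + y) := by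
  have hpos : 0 < σ ^ 2 + τ ^ 2 := by positivity
  rw [gauss1_eq_gaussianReal hσ, gauss1_eq_gaussianReal hτ,
    gauss1_eq_gaussianReal (Real.sqrt_pos.2 hpos).ne', gaussianReal_conv_gaussianReal,
    Real.sq_sqrt hpos.le, Real.toNNReal_add (by positivity) (by positivity)]

lemma integrable_sq_sub_gauss1 (hσ : σ ≠ 0) (x c : ℝ) :
    Integrable (fun y => (y - c) ^ 2) (gauss1 σ x) := by
  rw [gauss1_eq_gaussianReal hσ]
  exact ((memLp_id_gaussianReal 2).sub (memLp_const c)).integrable_sq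

lemma integral_sq_sub_gauss1 (hσ : σ ≠ 0) (x : ℝ) :
    ∫ y, (y - x) ^ 2 ∂gauss1 σ x = σ ^ 2 := by
  have h := variance_fun_id_gaussianReal (μ := x) (v := (σ ^ 2).toNNReal)
  rw [variance_eq_integral (by fun_prop), integral_id_gaussianReal] at h
  rw [gauss1_eq_gaussianReal hσ, h, Real.coe_toNNReal _ (sq_nonneg σ)]

lemma integrable_gauss1_of_abs_le (hσ : σ ≠ 0) (x : ℝ) {h : ℝ → ℝ} {A B : ℝ}
    (hm : Measurable h) (hb : ∀ y, |h y| ≤ A + B * y ^ 2) : Integrable h (gauss1 σ x) := by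
  have := isProbabilityMeasure_gauss1 hσ x
  refine Integrable.mono' ((integrable_const A).add
    ((integrable_sq_sub_gauss1 hσ x 0).const_mul B)) hm.aestronglyMeasurable (ae_of_all _ ?_)
  simpa using hb

lemma integral_log_phiR_gauss1 (hσ : σ ≠ 0) (x : ℝ) :
    ∫ y, Real.log (phiR σ (y - x)) ∂gauss1 σ x = -Real.log √(2 * π * σ ^ 2) - 1 / 2 := by
  have := isProbabilityMeasure_gauss1 hσ x
  simp_rw [log_phiR hσ]
  rw [integral_sub (integrable_const _) ((integrable_sq_sub_gauss1 hσ x x).div_const _),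
    integral_div, integral_sq_sub_gauss1 hσ, integral_const, probReal_univ, one_smul]
  field_simp

end Gauss1

section OutDens

variable {σ : ℝ} {μ : Measure ℝ}

lemma stronglyMeasurable_outDens (σ : ℝ) (μ : Measure ℝ) [SFinite μ] :
    StronglyMeasurable (outDens σ μ) :=
  ((continuous_phiR σ).comp (continuous_fst.sub continuous_snd)).stronglyMeasurable
    |>.integral_prod_right'

lemma integrable_phiR_sub [IsFiniteMeasure μ] (σ y : ℝ) :
    Integrable (fun x => phiR σ (y - x)) μ :=
  Integrable.of_bound (by fun_prop) (phiR σ 0) (ae_of_all _ fun x => by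
    rw [Real.norm_eq_abs, abs_of_nonneg (phiR_nonneg σ _)]
    exact phiR_le σ _)

lemma outDens_pos (hσ : σ ≠ 0) [IsFiniteMeasure μ] [NeZero μ] (y : ℝ) :
    0 < outDens σ μ y := by
  rw [outDens, integral_pos_iff_support_of_nonneg (fun x => phiR_nonneg σ _)
    (integrable_phiR_sub σ y)]
  simp [Function.support, (phiR_pos hσ _).ne', NeZero.ne μ]

lemma outDens_le [IsProbabilityMeasure μ] (σ y : ℝ) : outDens σ μ y ≤ phiR σ 0 := by
  simpa [outDens] using integral_mono (integrable_phiR_sub (μ := μ) σ y) (integrable_const _)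
    fun x => phiR_le σ (y - x)

lemma phiR_le_outDens [IsProbabilityMeasure μ] {R : ℝ} (hR : ∀ᵐ x ∂μ, |x| ≤ R) (σ y : ℝ) :
    phiR σ (|y| + R) ≤ outDens σ μ y := by
  have hle : ∀ᵐ x ∂μ, phiR σ (|y| + R) ≤ phiR σ (y - x) := by
    filter_upwards [hR] with x hx
    exact phiR_le_phiR σ ((abs_sub y x).trans
      ((by linarith : |y| + |x| ≤ |y| + R).trans (le_abs_self _)))
  simpa [outDens] using integral_mono_ae (integrable_const _) (integrable_phiR_sub σ y) hle

lemma abs_log_outDens_le (hσ : σ ≠ 0) [IsProbabilityMeasure μ] {R : ℝ}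
    (hR : ∀ᵐ x ∂μ, |x| ≤ R) (y : ℝ) :
    |Real.log (outDens σ μ y)| ≤
      |Real.log √(2 * π * σ ^ 2)| + R ^ 2 / σ ^ 2 + (σ ^ 2)⁻¹ * y ^ 2 := by
  set L := Real.log √(2 * π * σ ^ 2)
  have hup : Real.log (outDens σ μ y) ≤ -L := by
    simpa [log_phiR hσ] using Real.log_le_log (outDens_pos hσ y) (outDens_le σ y)
  have hlow : -L - (|y| + R) ^ 2 / (2 * σ ^ 2) ≤ Real.log (outDens σ μ y) := by
    simpa [log_phiR hσ] using Real.log_le_log (phiR_pos hσ _) (phiR_le_outDens hR σ y)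
  have hsq : (|y| + R) ^ 2 / (2 * σ ^ 2) ≤ R ^ 2 / σ ^ 2 + (σ ^ 2)⁻¹ * y ^ 2 := by
    have : (|y| + R) ^ 2 ≤ 2 * (R ^ 2 + y ^ 2) := by
      nlinarith [sq_nonneg (|y| - R), sq_abs y]
    calc (|y| + R) ^ 2 / (2 * σ ^ 2) ≤ 2 * (R ^ 2 + y ^ 2) / (2 * σ ^ 2) := by gcongr
      _ = R ^ 2 / σ ^ 2 + (σ ^ 2)⁻¹ * y ^ 2 := by field_simp
  rw [abs_le]
  constructor <;> nlinarith [le_abs_self L, neg_abs_le L, sq_nonneg y, sq_nonneg R,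
    inv_nonneg.2 (sq_nonneg σ), div_nonneg (sq_nonneg R) (sq_nonneg σ)]

lemma convGauss1_eq_withDensity (σ : ℝ) (μ : Measure ℝ) [IsFiniteMeasure μ] :
    convGauss1 μ σ = volume.withDensity fun y => ENNReal.ofReal (outDens σ μ y) := by
  have : SFinite (gauss1 σ 0) := by unfold gauss1; infer_instance
  ext s hs
  calc convGauss1 μ σ s = ∫⁻ z, s.indicator 1 z ∂(μ ∗ gauss1 σ 0) :=
        (lintegral_indicator_one hs).symm
    _ = ∫⁻ x, ∫⁻ t, s.indicator 1 (x + t) ∂gauss1 σ 0 ∂μ :=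
        Measure.lintegral_conv (measurable_one.indicator hs)
    _ = ∫⁻ x, ∫⁻ z, s.indicator 1 z * ENNReal.ofReal (phiR σ (z - x)) ∂volume ∂μ := by
        refine lintegral_congr fun x => ?_
        have hmeas : Measurable fun t => s.indicator (1 : ℝ → ℝ≥0∞) (x + t) :=
          (measurable_one.indicator hs).comp (measurable_const_add x)
        rw [gauss1, lintegral_withDensity_eq_lintegral_mul _ (by fun_prop) hmeas]
        conv_rhs => rw [← lintegral_add_left_eq_self _ x]
        simp [mul_comm]
    _ = ∫⁻ z, ∫⁻ x, s.indicator 1 z * ENNReal.ofReal (phiR σ (z - x)) ∂μ :=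
        lintegral_lintegral_swap
          (((measurable_one.indicator hs).comp measurable_snd).mul (by fun_prop)).aemeasurable
    _ = ∫⁻ z, s.indicator (fun y => ENNReal.ofReal (outDens σ μ y)) z := by
        refine lintegral_congr fun z => ?_
        rw [lintegral_const_mul _ (by fun_prop),
          ← ofReal_integral_eq_lintegral_ofReal (integrable_phiR_sub σ z)
            (ae_of_all _ fun x => phiR_nonneg σ _)]
        by_cases hz : z ∈ s <;> simp [hz, outDens]
    _ = _ := by rw [lintegral_indicator hs, withDensity_apply _ hs]

end OutDens

section KL

variable {σ : ℝ} {μ : Measure ℝ}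

lemma integrable_log_outDens {τ : ℝ} (hσ : σ ≠ 0) (hτ : τ ≠ 0) [IsProbabilityMeasure μ] {R : ℝ}
    (hR : ∀ᵐ x ∂μ, |x| ≤ R) (x : ℝ) :
    Integrable (fun y => Real.log (outDens σ μ y)) (gauss1 τ x) :=
  integrable_gauss1_of_abs_le hτ x (stronglyMeasurable_outDens σ μ).measurable.log
    (abs_log_outDens_le hσ hR)

lemma rnDeriv_gauss1_convGauss1 (hσ : σ ≠ 0) [IsProbabilityMeasure μ] (x : ℝ) :
    (gauss1 σ x).rnDeriv (convGauss1 μ σ) =ᵐ[volume]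
      fun y => ENNReal.ofReal (phiR σ (y - x)) / ENNReal.ofReal (outDens σ μ y) := by
  have := isProbabilityMeasure_gauss1 hσ x
  have hdens := Measure.rnDeriv_withDensity_right (gauss1 σ x) volume
    (stronglyMeasurable_outDens σ μ).measurable.ennreal_ofReal.aemeasurable
    (ae_of_all _ fun y => (ENNReal.ofReal_pos.2 (outDens_pos hσ y)).ne')
    (ae_of_all _ fun y => ENNReal.ofReal_ne_top)
  have hgauss : (gauss1 σ x).rnDeriv volume =ᵐ[volume]
      fun y => ENNReal.ofReal (phiR σ (y - x)) :=
    Measure.rnDeriv_withDensity volume (by fun_prop)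
  rw [convGauss1_eq_withDensity σ μ]
  filter_upwards [hdens, hgauss] with y hy1 hy2
  rw [hy1, hy2, div_eq_mul_inv, mul_comm]

lemma KL_gauss1_convGauss1 (hσ : σ ≠ 0) [IsProbabilityMeasure μ] {R : ℝ}
    (hR : ∀ᵐ x ∂μ, |x| ≤ R) (x : ℝ) :
    KL (gauss1 σ x) (convGauss1 μ σ) =
      -Real.log √(2 * π * σ ^ 2) - 1 / 2 - ∫ y, Real.log (outDens σ μ y) ∂gauss1 σ x := by
  have hlog : (fun y => Real.log ((gauss1 σ x).rnDeriv (convGauss1 μ σ) y).toReal)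
      =ᵐ[gauss1 σ x] fun y => Real.log (phiR σ (y - x)) - Real.log (outDens σ μ y) := by
    refine (withDensity_absolutelyContinuous _ _).ae_eq ?_
    filter_upwards [rnDeriv_gauss1_convGauss1 hσ (μ := μ) x] with y hy
    rw [hy, ENNReal.toReal_div, ENNReal.toReal_ofReal (phiR_pos hσ _).le,
      ENNReal.toReal_ofReal (outDens_pos hσ y).le,
      Real.log_div (phiR_pos hσ _).ne' (outDens_pos hσ y).ne']
  have := isProbabilityMeasure_gauss1 hσ x
  have hint : Integrable (fun y => Real.log (phiR σ (y - x))) (gauss1 σ x) := by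
    simp_rw [log_phiR hσ]
    exact (integrable_const _).sub ((integrable_sq_sub_gauss1 hσ x x).div_const _)
  rw [KL, integral_congr_ae hlog, integral_sub hint (integrable_log_outDens hσ hσ hR x),
    integral_log_phiR_gauss1 hσ]

end KL

lemma integral_gFun_gauss1 {σ1 σ2 : ℝ} (hσ1 : 0 < σ1) (hσ12 : σ1 < σ2) {μ : Measure ℝ}
    [IsProbabilityMeasure μ] {R : ℝ} (hR : ∀ᵐ x ∂μ, |x| ≤ R) (x : ℝ) :
    ∫ y, gFun σ1 σ2 μ y ∂gauss1 σ1 x =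
      (∫ y, Real.log (outDens σ2 μ y) ∂gauss1 σ2 x) -
        ∫ y, Real.log (outDens σ1 μ y) ∂gauss1 σ1 x := by
  have hσ2 : 0 < σ2 := hσ1.trans hσ12
  simp only [gFun]
  set η := √(σ2 ^ 2 - σ1 ^ 2)
  have hη : η ≠ 0 := (Real.sqrt_pos.2 (by nlinarith)).ne'
  have := isProbabilityMeasure_gauss1 hσ1.ne' x
  have := isProbabilityMeasure_gauss1 hη 0
  have hconv : gauss1 σ1 x ∗ gauss1 η 0 = gauss1 σ2 x := by
    rw [gauss1_conv_gauss1 hσ1.ne' hη, Real.sq_sqrt (by nlinarith), add_sub_cancel,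
      Real.sqrt_sq hσ2.le, add_zero]
  have hint : Integrable (fun y => Real.log (outDens σ2 μ y)) (gauss1 σ1 x ∗ gauss1 η 0) :=
    hconv ▸ integrable_log_outDens hσ2.ne' hσ2.ne' hR x
  have hinner : ∀ y, ∫ t, Real.log (outDens σ2 μ (y + t)) * phiR η t =
      ∫ t, Real.log (outDens σ2 μ (y + t)) ∂gauss1 η 0 := fun y => by
    simp [integral_gauss1 hη]
  simp only [hinner]
  rw [integral_sub hint.integral_add_right (integrable_log_outDens hσ1.ne' hσ1.ne' hR x),
    ← hconv, integral_conv hint]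

/-- For every compactly supported probability measure `μ` on `ℝ` and
every `x ∈ ℝ`, the difference of relative entropies equals
`∫ g(y) φ_{σ1}(y−x) dy + log(σ2/σ1)`. -/
theorem scalar_secrecy_density_representation
    (σ1 σ2 : ℝ) (hσ1 : 0 < σ1) (hσ12 : σ1 < σ2)
    (μ : Measure ℝ) (hprob : IsProbabilityMeasure μ)
    (hcomp : ∃ K : Set ℝ, IsCompact K ∧ μ Kᶜ = 0) (x : ℝ) :
    KL (gauss1 σ1 x) (convGauss1 μ σ1) - KL (gauss1 σ2 x) (convGauss1 μ σ2) =
      (∫ y : ℝ, gFun σ1 σ2 μ y * phiR σ1 (y - x)) + Real.log (σ2 / σ1) := by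
  have hσ2 : 0 < σ2 := hσ1.trans hσ12
  obtain ⟨K, hK, hKc⟩ := hcomp
  obtain ⟨R, hR⟩ := exists_ae_abs_le_of_isCompact hK hKc
  rw [KL_gauss1_convGauss1 hσ1.ne' hR, KL_gauss1_convGauss1 hσ2.ne' hR,
    ← integral_gauss1 hσ1.ne', integral_gFun_gauss1 hσ1 hσ12 hR,
    log_sqrt_two_pi_mul_sq hσ1, log_sqrt_two_pi_mul_sq hσ2, Real.log_div hσ2.ne' hσ1.ne']
  ring
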